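/- arXiv:2211.07096 — 5 statements merged into one kernel-verified Lean document; each statement's English description precedes it below -/
import Mathlib

section
/- Let A ∈ ℝ^{m_y × d_y} with Moore–Penrose inverse A⁺, let V₂ be a real d_y × k matrix whose columns form an orthonormal basis of ker(A), let c ∈ ℝ^{m_y}, let g : ℝ^{d_x} × ℝ^{d_y} → ℝ be twice continuously differentiable such that g(x,·) is μ_g-strongly convex for every x (μ_g > 0), and let h : ℝ^{d_x} → ℝ^{m_y} be differentiable. Assume that for every x the set 𝒴(x) = {y ∈ ℝ^{d_y} : A y + h(x) = c} is nonempty, and let y* : ℝ^{d_x} → ℝ^{d_y} satisfy, for every x, y*(x) ∈ 𝒴(x) and g(x, y*(x)) ≤ g(x, y) for all y ∈ 𝒴(x). If y* is differentiable at a point x, then the k × k matrix V₂ᵀ ∇_{yy} g(x, y*(x)) V₂ is invertible and the Jacobian of y* at x equals −V₂ (V₂ᵀ ∇_{yy} g(x, y*(x)) V₂)⁻¹ V₂ᵀ (∇_{yx} g(x, y*(x)) − ∇_{yy} g(x, y*(x)) A⁺ ∇h(x)) − A⁺ ∇h(x). -/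
/-!
For `w ∈ ker A`, the point `y*(x')` minimises `t ↦ g x' (y*(x') + t w)`, so
`∂_y g(x', y*(x')) w = 0` for every `x'`. Differentiating at `x` gives
`V₂ᵀ (∇_{yx} g + ∇_{yy} g J) = 0` for the Jacobian `J` of `y*`, and differentiating the constraint
gives `A J = -∇h`. Strong convexity makes `∇_{yy} g` positive definite, so `V₂ᵀ ∇_{yy} g V₂` is
invertible. Since `A (J + A⁺ ∇h) = 0` by `A A⁺ A = A`, the columns of `J + A⁺ ∇h` lie in
`ker A = range V₂`, so `J + A⁺ ∇h = V₂ V₂ᵀ (J + A⁺ ∇h)`; substituting this into the first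
equation and solving for `V₂ᵀ (J + A⁺ ∇h)` gives the formula.
-/

open Matrix
open scoped Kronecker

noncomputable section

/-- `ℝ^n` with the Euclidean inner product. -/
abbrev Euc (n : ℕ) : Type := EuclideanSpace ℝ (Fin n)

/-- Reinterpret a plain vector as an element of Euclidean space. -/
def toEuc {n : ℕ} (v : Fin n → ℝ) : Euc n := WithLp.toLp 2 v

/-- Spectral (operator) norm of a real matrix. -/
def specNorm {m n : Type*} [Fintype m] [Fintype n] [DecidableEq n]
    (M : Matrix m n ℝ) : ℝ :=
  ‖LinearMap.toContinuousLinearMap (Matrix.toEuclideanLin M)‖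

/-- The four Moore–Penrose identities. -/
def IsMoorePenrose {a b : ℕ} (A : Matrix (Fin a) (Fin b) ℝ)
    (Ap : Matrix (Fin b) (Fin a) ℝ) : Prop :=
  A * Ap * A = A ∧ Ap * A * Ap = Ap ∧ (A * Ap)ᵀ = A * Ap ∧ (Ap * A)ᵀ = Ap * A

/-- Partial gradient in the first variable. -/
def gradx {dx dy : ℕ} (f : Euc dx → Euc dy → ℝ) (x : Euc dx) (y : Euc dy) : Euc dx :=
  gradient (fun x' => f x' y) x

/-- Partial gradient in the second variable. -/
def grady {dx dy : ℕ} (f : Euc dx → Euc dy → ℝ) (x : Euc dx) (y : Euc dy) : Euc dy :=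
  gradient (fun y' => f x y') y

/-- Jacobian matrix of a vector-valued map: entry `(i, j)` is `∂φ_i/∂x_j`. -/
def jacM {n m : ℕ} (φ : Euc n → Euc m) (x : Euc n) : Matrix (Fin m) (Fin n) ℝ :=
  Matrix.of fun i j => fderiv ℝ φ x (EuclideanSpace.single j (1 : ℝ)) i

/-- `∇_{yy} g(x,y)`: entry `(i, j)` is `∂²g/∂y_i∂y_j`. -/
def hessYY {dx dy : ℕ} (g : Euc dx → Euc dy → ℝ) (x : Euc dx) (y : Euc dy) :
    Matrix (Fin dy) (Fin dy) ℝ :=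
  Matrix.of fun i j => gradient (fun y' => grady g x y' j) y i

/-- `∇_{xy} g(x,y)`: entry `(i, j)` is `∂²g/∂x_i∂y_j`. -/
def hessXY {dx dy : ℕ} (g : Euc dx → Euc dy → ℝ) (x : Euc dx) (y : Euc dy) :
    Matrix (Fin dx) (Fin dy) ℝ :=
  Matrix.of fun i j => gradient (fun x' => grady g x' y j) x i

/-- `∇_{yx} g(x,y)`: entry `(i, j)` is `∂²g/∂y_i∂x_j`. -/
def hessYX {dx dy : ℕ} (g : Euc dx → Euc dy → ℝ) (x : Euc dx) (y : Euc dy) :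
    Matrix (Fin dy) (Fin dx) ℝ :=
  Matrix.of fun i j => gradient (fun y' => gradx g x y' j) y i

/-- `∇_{xx} g(x,y)`. -/
def hessXX {dx dy : ℕ} (g : Euc dx → Euc dy → ℝ) (x : Euc dx) (y : Euc dy) :
    Matrix (Fin dx) (Fin dx) ℝ :=
  Matrix.of fun i j => gradient (fun x' => gradx g x' y j) x i

/-- The surrogate upper-level gradient `∇̄f(x,y)`. -/
def nablaBarF {dx dy my k : ℕ} (Ap : Matrix (Fin dy) (Fin my) ℝ)
    (V₂ : Matrix (Fin dy) (Fin k) ℝ) (f g : Euc dx → Euc dy → ℝ)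
    (h : Euc dx → Euc my) (x : Euc dx) (y : Euc dy) : Euc dx :=
  gradx f x y + toEuc
    ((((jacM h x)ᵀ * Apᵀ * hessYY g x y - hessXY g x y) * V₂ *
        (V₂ᵀ * hessYY g x y * V₂)⁻¹ * V₂ᵀ - (jacM h x)ᵀ * Apᵀ).mulVec (grady f x y))

section LinearAlgebra

variable {m n k p R : Type*} [Fintype n] [Fintype k] [Fintype p] [CommRing R]

theorem Matrix.transpose_mul_eq_zero_of_forall_dotProduct [LinearOrder R] [IsStrictOrderedRing R]
    {V : Matrix n k R} {M : Matrix n p R} (h : ∀ a u, (V *ᵥ a) ⬝ᵥ (M *ᵥ u) = 0) :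
    Vᵀ * M = 0 := by
  refine ext_iff_mulVec.mpr fun u => ?_
  rw [zero_mulVec, ← mulVec_mulVec, ← dotProduct_self_eq_zero]
  conv_lhs => rw [dotProduct_mulVec, vecMul_transpose]
  exact h _ _

theorem Matrix.mul_transpose_mul_eq_self_of_mul_eq_zero [DecidableEq k] {A : Matrix m n R}
    {V : Matrix n k R} {M : Matrix n p R} (hV : Vᵀ * V = 1)
    (hker : LinearMap.range V.mulVecLin = LinearMap.ker A.mulVecLin) (hM : A * M = 0) :
    V * (Vᵀ * M) = M := by
  refine ext_iff_mulVec.mpr fun u => ?_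
  have hMu : M *ᵥ u ∈ LinearMap.range V.mulVecLin := by
    rw [hker, LinearMap.mem_ker, mulVecLin_apply, mulVec_mulVec, hM, zero_mulVec]
  obtain ⟨a, ha⟩ := hMu
  rw [mulVecLin_apply] at ha
  rw [← mulVec_mulVec, ← mulVec_mulVec, ← ha, mulVec_mulVec a, hV, one_mulVec]

theorem Matrix.eq_of_transpose_mul_add_eq_zero [Fintype m] [DecidableEq k] {A : Matrix m n R}
    {Ap : Matrix n m R} {V : Matrix n k R} {H : Matrix n n R} {B J : Matrix n p R}
    {N : Matrix m p R} (hA : A * Ap * A = A) (hV : Vᵀ * V = 1)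
    (hker : LinearMap.range V.mulVecLin = LinearMap.ker A.mulVecLin)
    (hS : IsUnit (Vᵀ * H * V)) (hstat : Vᵀ * (B + H * J) = 0) (hcons : A * J = -N) :
    J = -(V * (Vᵀ * H * V)⁻¹ * Vᵀ * (B - H * Ap * N)) - Ap * N := by
  have hN : A * Ap * N = N := by
    rw [← neg_neg N, ← hcons, Matrix.mul_neg, ← Matrix.mul_assoc, hA]
  have hP : V * (Vᵀ * (J + Ap * N)) = J + Ap * N := by
    refine mul_transpose_mul_eq_self_of_mul_eq_zero hV hker ?_
    rw [Matrix.mul_add, hcons, ← Matrix.mul_assoc, hN, neg_add_cancel]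
  have hSP : (Vᵀ * H * V) * (Vᵀ * (J + Ap * N)) = Vᵀ * (H * Ap * N - B) := by
    rw [Matrix.mul_assoc, Matrix.mul_assoc, hP, ← sub_eq_zero, ← Matrix.mul_sub, ← hstat]
    congr 1
    simp only [Matrix.mul_add, Matrix.mul_assoc]
    abel
  have hVP : Vᵀ * (J + Ap * N) = (Vᵀ * H * V)⁻¹ * (Vᵀ * (H * Ap * N - B)) := by
    rw [← hSP, ← Matrix.mul_assoc, nonsing_inv_mul _ ((isUnit_iff_isUnit_det _).mp hS),
      Matrix.one_mul]
  calc J = V * (Vᵀ * (J + Ap * N)) - Ap * N := by rw [hP, add_sub_cancel_right]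
    _ = _ := by
      rw [hVP, ← neg_sub B, Matrix.mul_neg, Matrix.mul_neg, Matrix.mul_neg]
      simp only [Matrix.mul_assoc]

end LinearAlgebra

section Calculus

variable {E G : Type*} [NormedAddCommGroup E] [NormedSpace ℝ E]
  [NormedAddCommGroup G] [NormedSpace ℝ G]

theorem ConvexOn.nonneg_of_hasDerivAt_of_hasDerivAt {φ φ' : ℝ → ℝ} {d a : ℝ}
    (hφ : ConvexOn ℝ Set.univ φ) (hφ' : ∀ t, HasDerivAt φ (φ' t) t)
    (hφ'' : HasDerivAt φ' d a) : 0 ≤ d := by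
  have hderiv : deriv φ = φ' := funext fun t => (hφ' t).deriv
  have hmono := hφ.monotoneOn_deriv fun t _ => (hφ' t).differentiableAt
  rw [hderiv, monotoneOn_univ] at hmono
  exact hφ''.nonneg_of_monotone hmono

theorem fderiv_apply_eq_zero_of_forall_le_add_smul {f : E → ℝ} {x w : E}
    (hf : DifferentiableAt ℝ f x) (hmin : ∀ t : ℝ, f x ≤ f (x + t • w)) :
    fderiv ℝ f x w = 0 := by
  have hline : HasDerivAt (fun t : ℝ => f (x + t • w)) (fderiv ℝ f x w) 0 := by
    have hL : HasDerivAt (fun t : ℝ => x + t • w) w 0 := by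
      simpa using ((hasDerivAt_id (0 : ℝ)).smul_const w).const_add x
    exact hf.hasFDerivAt.comp_hasDerivAt_of_eq 0 hL (by simp)
  exact IsLocalMin.hasDerivAt_eq_zero (Filter.Eventually.of_forall fun t => by simpa using hmin t)
    hline

theorem ContDiff.hasFDerivAt_fderiv_apply_comp {f : E → ℝ} (hf : ContDiff ℝ 2 f) {φ : G → E}
    {φ' : G →L[ℝ] E} {z : G} (hφ : HasFDerivAt φ φ' z) (w : E) :
    HasFDerivAt (fun u => fderiv ℝ f (φ u) w)
      (((fderiv ℝ (fderiv ℝ f) (φ z)).comp φ').flip w) z := by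
  have hf' : Differentiable ℝ (fderiv ℝ f) :=
    (hf.fderiv_right (m := 1) (by norm_num)).differentiable one_ne_zero
  simpa using ((hf' (φ z)).hasFDerivAt.comp z hφ).clm_apply (hasFDerivAt_const w z)

theorem ContDiff.fderiv_fderiv_apply_eq_zero {f : E → ℝ} (hf : ContDiff ℝ 2 f) {φ : G → E}
    {φ' : G →L[ℝ] E} {z : G} (hφ : HasFDerivAt φ φ' z) {w : E}
    (hzero : ∀ u, fderiv ℝ f (φ u) w = 0) (v : G) :
    fderiv ℝ (fderiv ℝ f) (φ z) (φ' v) w = 0 := by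
  have hconst : HasFDerivAt (fun u => fderiv ℝ f (φ u) w) (0 : G →L[ℝ] ℝ) z := by
    simpa only [hzero] using hasFDerivAt_const (0 : ℝ) z
  simpa using congrArg (· v) ((hf.hasFDerivAt_fderiv_apply_comp hφ w).unique hconst)

end Calculus

section StrongConvexity

open scoped RealInnerProductSpace

variable {E F : Type*} [NormedAddCommGroup E] [NormedSpace ℝ E]
  [NormedAddCommGroup F] [InnerProductSpace ℝ F]

theorem mul_norm_sq_le_fderiv_fderiv_uncurry {g : E → F → ℝ}
    (hg : ContDiff ℝ 2 (Function.uncurry g)) {μ : ℝ} {x : E}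
    (hsc : ConvexOn ℝ Set.univ fun y => g x y - μ / 2 * ‖y‖ ^ 2) (y v : F) :
    μ * ‖v‖ ^ 2 ≤ fderiv ℝ (fderiv ℝ (Function.uncurry g)) (x, y) (0, v) (0, v) := by
  have hline : ∀ t : ℝ, HasDerivAt (fun t : ℝ => y + t • v) v t := fun t => by
    simpa using ((hasDerivAt_id t).smul_const v).const_add y
  have hL : ∀ t : ℝ, HasDerivAt (fun t : ℝ => ((x, y + t • v) : E × F)) (0, v) t :=
    fun t => (hasDerivAt_const t x).prodMk (hline t)
  have hφ : ConvexOn ℝ Set.univ fun t : ℝ => g x (y + t • v) - μ / 2 * ‖y + t • v‖ ^ 2 := by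
    refine (hsc.comp_affineMap (AffineMap.lineMap y (y + v))).congr fun t _ => ?_
    simp [AffineMap.lineMap_apply_module', add_comm]
  have hφ' : ∀ t : ℝ, HasDerivAt (fun t : ℝ => g x (y + t • v) - μ / 2 * ‖y + t • v‖ ^ 2)
      (fderiv ℝ (Function.uncurry g) (x, y + t • v) (0, v) - μ / 2 * (2 * ⟪y + t • v, v⟫)) t :=
    fun t => ((hg.differentiable (by norm_num) _).hasFDerivAt.comp_hasDerivAt t (hL t)).sub
      ((hline t).norm_sq.const_mul _)
  have hφ'' : HasDerivAt
      (fun t : ℝ => fderiv ℝ (Function.uncurry g) (x, y + t • v) (0, v)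
        - μ / 2 * (2 * ⟪y + t • v, v⟫))
      (fderiv ℝ (fderiv ℝ (Function.uncurry g)) (x, y) (0, v) (0, v) - μ / 2 * (2 * ⟪v, v⟫))
      0 := by
    refine ((hg.hasFDerivAt_fderiv_apply_comp (hL 0).hasFDerivAt (0, v)).hasDerivAt.sub
      (((hline 0).inner ℝ (hasDerivAt_const 0 v)).const_mul 2 |>.const_mul (μ / 2))).congr_deriv ?_
    simp
  have h := hφ.nonneg_of_hasDerivAt_of_hasDerivAt hφ' hφ''
  rw [real_inner_self_eq_norm_sq] at h
  linarith

end StrongConvexity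

section EuclideanCoordinates

variable {ι κ : Type*} [Fintype ι] [DecidableEq ι] [Fintype κ] [DecidableEq κ]

theorem gradient_apply_eq_fderiv_single (f : EuclideanSpace ℝ ι → ℝ) (y : EuclideanSpace ℝ ι)
    (j : ι) : gradient f y j = fderiv ℝ f y (EuclideanSpace.single j 1) := by
  rw [← inner_gradient_left, EuclideanSpace.inner_single_right]
  simp

theorem ContinuousLinearMap.apply_eq_dotProduct (ℓ : EuclideanSpace ℝ ι →L[ℝ] ℝ)
    (v : EuclideanSpace ℝ ι) : ℓ v = v ⬝ᵥ fun i => ℓ (EuclideanSpace.single i 1) := by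
  conv_lhs => rw [← (EuclideanSpace.basisFun ι ℝ).sum_repr v]
  simp [dotProduct]

theorem ContinuousLinearMap.apply_apply_eq_dotProduct_mulVec
    (b : EuclideanSpace ℝ ι →L[ℝ] EuclideanSpace ℝ κ →L[ℝ] ℝ) (v : EuclideanSpace ℝ ι)
    (w : EuclideanSpace ℝ κ) :
    b v w = v ⬝ᵥ Matrix.of (fun i j => b (EuclideanSpace.single i 1) (EuclideanSpace.single j 1))
      *ᵥ w := by
  have hcol : ∀ j, b v (EuclideanSpace.single j 1)
      = v ⬝ᵥ fun i => b (EuclideanSpace.single i 1) (EuclideanSpace.single j 1) :=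
    fun j => (b.flip (EuclideanSpace.single j 1)).apply_eq_dotProduct v
  rw [(b v).apply_eq_dotProduct, dotProduct_mulVec, dotProduct_comm]
  simp only [hcol, dotProduct, vecMul, Matrix.of_apply, Finset.sum_mul]

end EuclideanCoordinates

section Jacobian

variable {n m k : ℕ} {x : Euc n}

theorem jacM_mulVec (φ : Euc n → Euc m) (x : Euc n) (u : Fin n → ℝ) :
    jacM φ x *ᵥ u = fderiv ℝ φ x (toEuc u) := by
  ext i
  have h := (EuclideanSpace.proj i ∘L fderiv ℝ φ x).apply_eq_dotProduct (toEuc u)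
  simp only [ContinuousLinearMap.comp_apply, PiLp.proj_apply] at h
  rw [h, dotProduct_comm]
  rfl

theorem jacM_const (c : Euc m) : jacM (fun _ : Euc n => c) x = 0 := by
  ext i j
  simp [jacM]

theorem jacM_add {φ ψ : Euc n → Euc m} (hφ : DifferentiableAt ℝ φ x)
    (hψ : DifferentiableAt ℝ ψ x) :
    jacM (fun x => φ x + ψ x) x = jacM φ x + jacM ψ x := by
  ext i j
  simp [jacM, fderiv_fun_add hφ hψ]

theorem hasFDerivAt_toEuc_mulVec_comp (A : Matrix (Fin m) (Fin k) ℝ) {φ : Euc n → Euc k}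
    (hφ : DifferentiableAt ℝ φ x) :
    HasFDerivAt (fun x => toEuc (A *ᵥ φ x))
      ((LinearMap.toContinuousLinearMap (Matrix.toLpLin 2 2 A)).comp (fderiv ℝ φ x)) x :=
  (LinearMap.toContinuousLinearMap (Matrix.toLpLin 2 2 A)).hasFDerivAt.comp x hφ.hasFDerivAt

theorem jacM_toEuc_mulVec_comp (A : Matrix (Fin m) (Fin k) ℝ) {φ : Euc n → Euc k}
    (hφ : DifferentiableAt ℝ φ x) : jacM (fun x => toEuc (A *ᵥ φ x)) x = A * jacM φ x := by
  ext i j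
  simp [jacM, (hasFDerivAt_toEuc_mulVec_comp A hφ).fderiv, Matrix.toLpLin_apply, mul_apply,
    mulVec, dotProduct]

end Jacobian

section SecondDerivatives

variable {dx dy : ℕ} {g : Euc dx → Euc dy → ℝ} {x : Euc dx} {y : Euc dy}

theorem grady_apply (hg : DifferentiableAt ℝ (Function.uncurry g) (x, y)) (j : Fin dy) :
    grady g x y j = fderiv ℝ (Function.uncurry g) (x, y) (0, EuclideanSpace.single j 1) := by
  have h : HasFDerivAt (fun y' => g x y')
      ((fderiv ℝ (Function.uncurry g) (x, y)).comp (ContinuousLinearMap.inr ℝ _ _)) y :=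
    hg.hasFDerivAt.comp y (hasFDerivAt_prodMk_right x y)
  rw [grady, gradient_apply_eq_fderiv_single, h.fderiv]
  simp

theorem gradx_apply (hg : DifferentiableAt ℝ (Function.uncurry g) (x, y)) (j : Fin dx) :
    gradx g x y j = fderiv ℝ (Function.uncurry g) (x, y) (EuclideanSpace.single j 1, 0) := by
  have h : HasFDerivAt (fun x' => g x' y)
      ((fderiv ℝ (Function.uncurry g) (x, y)).comp (ContinuousLinearMap.inl ℝ _ _)) x := by
    exact hg.hasFDerivAt.comp x (hasFDerivAt_prodMk_left (𝕜 := ℝ) x y)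
  rw [gradx, gradient_apply_eq_fderiv_single, h.fderiv]
  simp

theorem hessYY_eq (hg : ContDiff ℝ 2 (Function.uncurry g)) :
    hessYY g x y = Matrix.of fun i j => fderiv ℝ (fderiv ℝ (Function.uncurry g)) (x, y)
      (0, EuclideanSpace.single i 1) (0, EuclideanSpace.single j 1) := by
  ext i j
  have hcoord : (fun y' => grady g x y' j)
      = fun y' => fderiv ℝ (Function.uncurry g) (x, y') (0, EuclideanSpace.single j 1) :=
    funext fun y' => grady_apply (hg.differentiable (by norm_num) _) j
  rw [hessYY, of_apply, hcoord, gradient_apply_eq_fderiv_single,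
    (hg.hasFDerivAt_fderiv_apply_comp (hasFDerivAt_prodMk_right x y) _).fderiv]
  simp

theorem hessYX_eq (hg : ContDiff ℝ 2 (Function.uncurry g)) :
    hessYX g x y = Matrix.of fun i j => fderiv ℝ (fderiv ℝ (Function.uncurry g)) (x, y)
      (0, EuclideanSpace.single i 1) (EuclideanSpace.single j 1, 0) := by
  ext i j
  have hcoord : (fun y' => gradx g x y' j)
      = fun y' => fderiv ℝ (Function.uncurry g) (x, y') (EuclideanSpace.single j 1, 0) :=
    funext fun y' => gradx_apply (hg.differentiable (by norm_num) _) j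
  rw [hessYX, of_apply, hcoord, gradient_apply_eq_fderiv_single,
    (hg.hasFDerivAt_fderiv_apply_comp (hasFDerivAt_prodMk_right x y) _).fderiv]
  simp

theorem fderiv_fderiv_uncurry_apply_inr (hg : ContDiff ℝ 2 (Function.uncurry g)) (u : Euc dx)
    (v w : Euc dy) :
    fderiv ℝ (fderiv ℝ (Function.uncurry g)) (x, y) (u, v) (0, w)
      = w ⬝ᵥ (hessYX g x y *ᵥ u + hessYY g x y *ᵥ v) := by
  set D2 := fderiv ℝ (fderiv ℝ (Function.uncurry g)) (x, y)
  have hsplit : ((u, v) : Euc dx × Euc dy) = (u, 0) + (0, v) := by simp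
  rw [(hg.contDiffAt.isSymmSndFDerivAt (by simp)).eq, hsplit, map_add, dotProduct_add,
    hessYX_eq hg, hessYY_eq hg]
  exact congrArg₂ (· + ·)
    ((D2.bilinearComp (.inr ℝ _ _) (.inl ℝ _ _)).apply_apply_eq_dotProduct_mulVec w u)
    ((D2.bilinearComp (.inr ℝ _ _) (.inr ℝ _ _)).apply_apply_eq_dotProduct_mulVec w v)

theorem hessYY_posDef (hg : ContDiff ℝ 2 (Function.uncurry g)) {μ : ℝ} (hμ : 0 < μ)
    (hsc : ConvexOn ℝ Set.univ fun y => g x y - μ / 2 * ‖y‖ ^ 2) (y : Euc dy) :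
    (hessYY g x y).PosDef := by
  refine .of_dotProduct_mulVec_pos (IsHermitian.ext fun i j => ?_) fun v hv => ?_
  · rw [hessYY_eq hg]
    simp [(hg.contDiffAt.isSymmSndFDerivAt (by simp)).eq]
  · have hquad := mul_norm_sq_le_fderiv_fderiv_uncurry hg hsc y (toEuc v)
    rw [fderiv_fderiv_uncurry_apply_inr hg] at hquad
    have hv' : 0 < ‖toEuc v‖ := norm_pos_iff.mpr fun h => hv (congrArg WithLp.ofLp h)
    simp only [toEuc, WithLp.ofLp_zero, mulVec_zero, zero_add] at hquad hv'
    rw [star_trivial]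
    exact lt_of_lt_of_le (by positivity) hquad

theorem dotProduct_hessYX_add_hessYY_mul_jacM_mulVec_eq_zero
    (hg : ContDiff ℝ 2 (Function.uncurry g)) {ψ : Euc dx → Euc dy}
    (hψ : DifferentiableAt ℝ ψ x) {w : Euc dy}
    (hfoc : ∀ x', fderiv ℝ (Function.uncurry g) (x', ψ x') (0, w) = 0) (u : Fin dx → ℝ) :
    w ⬝ᵥ ((hessYX g x (ψ x) + hessYY g x (ψ x) * jacM ψ x) *ᵥ u) = 0 := by
  have hgraph : HasFDerivAt (fun x' => (x', ψ x'))
      ((ContinuousLinearMap.id ℝ (Euc dx)).prod (fderiv ℝ ψ x)) x :=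
    (hasFDerivAt_id x).prodMk hψ.hasFDerivAt
  have h := hg.fderiv_fderiv_apply_eq_zero hgraph hfoc (toEuc u)
  rw [ContinuousLinearMap.prod_apply, ContinuousLinearMap.id_apply,
    fderiv_fderiv_uncurry_apply_inr hg, ← jacM_mulVec] at h
  simpa [add_mulVec, mulVec_mulVec, toEuc] using h

end SecondDerivatives

theorem implicit_gradient_formula_general
    {dx dy my k : ℕ}
    (A : Matrix (Fin my) (Fin dy) ℝ) (Ap : Matrix (Fin dy) (Fin my) ℝ)
    (hMP : IsMoorePenrose A Ap)
    (V₂ : Matrix (Fin dy) (Fin k) ℝ)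
    (hV₂orth : V₂ᵀ * V₂ = 1)
    (hV₂ker : LinearMap.range V₂.mulVecLin = LinearMap.ker A.mulVecLin)
    (c : Euc my)
    (g : Euc dx → Euc dy → ℝ)
    (hg : ContDiff ℝ 2 (Function.uncurry g))
    (μg : ℝ) (hμ : 0 < μg)
    (hsc : ∀ x : Euc dx, ConvexOn ℝ Set.univ
      (fun y : Euc dy => g x y - μg / 2 * ‖y‖ ^ 2))
    (h : Euc dx → Euc my) (hh : Differentiable ℝ h)
    (ystar : Euc dx → Euc dy)
    (hy_feas : ∀ x : Euc dx, toEuc (A.mulVec (ystar x)) + h x = c)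
    (hy_min : ∀ x : Euc dx, ∀ y : Euc dy,
      toEuc (A.mulVec y) + h x = c → g x (ystar x) ≤ g x y)
    (x : Euc dx) (hdiff : DifferentiableAt ℝ ystar x) :
    IsUnit (V₂ᵀ * hessYY g x (ystar x) * V₂) ∧
    jacM ystar x =
      -(V₂ * (V₂ᵀ * hessYY g x (ystar x) * V₂)⁻¹ * V₂ᵀ *
          (hessYX g x (ystar x) - hessYY g x (ystar x) * Ap * jacM h x))
        - Ap * jacM h x := by
  have hS : IsUnit (V₂ᵀ * hessYY g x (ystar x) * V₂) := by
    have hV₂inj : Function.Injective V₂.mulVec := Function.LeftInverse.injective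
      (g := V₂ᵀ.mulVec) fun a => by rw [mulVec_mulVec, hV₂orth, one_mulVec]
    simpa using ((hessYY_posDef hg hμ (hsc x) (ystar x)).conjTranspose_mul_mul_same hV₂inj).isUnit
  have hfoc : ∀ w : Euc dy, A *ᵥ w = 0 → ∀ x',
      fderiv ℝ (Function.uncurry g) (x', ystar x') (0, w) = 0 := by
    intro w hw x'
    refine fderiv_apply_eq_zero_of_forall_le_add_smul
      (hg.differentiable (by norm_num) _) fun t => ?_
    have hfeas_t : toEuc (A *ᵥ (ystar x' + t • w)) + h x' = c := by
      simpa [mulVec_add, mulVec_smul, hw] using hy_feas x'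
    simpa using hy_min x' _ hfeas_t
  have hker : ∀ a, A *ᵥ (V₂ *ᵥ a) = 0 := fun a =>
    LinearMap.mem_ker.mp (hV₂ker ▸ LinearMap.mem_range_self V₂.mulVecLin a)
  have hcons : jacM (fun x' => toEuc (A *ᵥ ystar x') + h x') x = 0 := by
    rw [funext hy_feas]
    exact jacM_const c
  rw [jacM_add (hasFDerivAt_toEuc_mulVec_comp A hdiff).differentiableAt (hh x),
    jacM_toEuc_mulVec_comp A hdiff] at hcons
  refine ⟨hS, eq_of_transpose_mul_add_eq_zero hMP.1 hV₂orth hV₂ker hS ?_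
    (eq_neg_of_add_eq_zero_left hcons)⟩
  refine transpose_mul_eq_zero_of_forall_dotProduct fun a u => ?_
  simpa [toEuc] using dotProduct_hessYX_add_hessYY_mul_jacM_mulVec_eq_zero hg hdiff
    (hfoc (toEuc (V₂ *ᵥ a)) (by simpa [toEuc] using hker a)) u

/-- implicit gradient formula for the lower-level solution of a
linearly-constrained strongly-convex problem. -/
theorem implicit_gradient_formula
    {dx dy my k : ℕ}
    (A : Matrix (Fin my) (Fin dy) ℝ) (Ap : Matrix (Fin dy) (Fin my) ℝ)
    (hMP : IsMoorePenrose A Ap)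
    (V₂ : Matrix (Fin dy) (Fin k) ℝ)
    (hV₂orth : V₂ᵀ * V₂ = 1)
    (hV₂ker : LinearMap.range V₂.mulVecLin = LinearMap.ker A.mulVecLin)
    (c : Euc my)
    (g : Euc dx → Euc dy → ℝ)
    (hg : ContDiff ℝ 2 (Function.uncurry g))
    (μg : ℝ) (hμ : 0 < μg)
    (hsc : ∀ x : Euc dx, ConvexOn ℝ Set.univ
      (fun y : Euc dy => g x y - μg / 2 * ‖y‖ ^ 2))
    (h : Euc dx → Euc my) (hh : Differentiable ℝ h)
    (hfeas : ∀ x : Euc dx, ∃ y : Euc dy, toEuc (A.mulVec y) + h x = c)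
    (ystar : Euc dx → Euc dy)
    (hy_feas : ∀ x : Euc dx, toEuc (A.mulVec (ystar x)) + h x = c)
    (hy_min : ∀ x : Euc dx, ∀ y : Euc dy,
      toEuc (A.mulVec y) + h x = c → g x (ystar x) ≤ g x y)
    (x : Euc dx) (hdiff : DifferentiableAt ℝ ystar x) :
    IsUnit (V₂ᵀ * hessYY g x (ystar x) * V₂) ∧
    jacM ystar x =
      -(V₂ * (V₂ᵀ * hessYY g x (ystar x) * V₂)⁻¹ * V₂ᵀ *
          (hessYX g x (ystar x) - hessYY g x (ystar x) * Ap * jacM h x))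
        - Ap * jacM h x :=
  implicit_gradient_formula_general A Ap hMP V₂ hV₂orth hV₂ker c g hg μg hμ hsc h hh ystar hy_feas
    hy_min x hdiff
end
end

section
/- Let H be a real symmetric d × d matrix with μ I ⪯ H and spectral norm ‖H‖ ≤ ℓ, where 0 < μ ≤ ℓ, let V₂ be a real d × k matrix with orthonormal columns (V₂ᵀ V₂ = I_k), let 0 < c̃ ≤ 1, and let N be a natural number. Then ‖V₂ (V₂ᵀ H V₂)⁻¹ V₂ᵀ − (c̃/ℓ) Σ_{n=0}^{N−1} V₂ (I_k − (c̃/ℓ) V₂ᵀ H V₂)ⁿ V₂ᵀ‖ ≤ (1/μ)(1 − c̃ μ/ℓ)^N, where ‖·‖ is the spectral norm. -/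
open Matrix
open scoped Kronecker

noncomputable section

/-! Put `B = V₂ᵀ H V₂` and `s = c / ℓ`. Summing the geometric series,
`B⁻¹ - s ∑_{n<N} (1 - s B)ⁿ = B⁻¹ (1 - s B)ᴺ = f(B)` with `f(x) = x⁻¹ (1 - s x)ᴺ`.
Compressing `μ ≤ H ≤ ℓ` by the isometry `V₂` puts the spectrum of `B` in `[μ, ℓ]`, where
`|f| ≤ μ⁻¹ (1 - s μ)ᴺ`; since the continuous functional calculus of real symmetric matrices is
isometric for the spectral norm, this bounds `‖f(B)‖`, and conjugation by `V₂` does not increase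
the norm. -/

open Set Finset
open scoped Ring MatrixOrder Matrix.Norms.L2Operator

lemma inverse_sub_smul_geom_sum {R A : Type*} [CommRing R] [Ring A] [Algebra R A] {b : A}
    (hb : IsUnit b) (s : R) (N : ℕ) :
    b⁻¹ʳ - s • ∑ i ∈ range N, (1 - s • b) ^ i = b⁻¹ʳ * (1 - s • b) ^ N := by
  have hsum : s • ∑ i ∈ range N, (1 - s • b) ^ i = b⁻¹ʳ * (1 - (1 - s • b) ^ N) := by
    rw [← mul_neg_geom_sum, sub_sub_cancel, ← mul_assoc, mul_smul_comm,
      Ring.inverse_mul_cancel b hb, smul_mul_assoc, one_mul]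
  rw [hsum, mul_sub, mul_one, sub_sub_cancel]

lemma abs_inv_mul_one_sub_mul_pow_le {μ ℓ s x : ℝ} (hμ : 0 < μ) (hx : x ∈ Icc μ ℓ) (hs : 0 ≤ s)
    (hsℓ : s * ℓ ≤ 1) (N : ℕ) : |x⁻¹ * (1 - s * x) ^ N| ≤ μ⁻¹ * (1 - s * μ) ^ N := by
  obtain ⟨hμx, hxℓ⟩ := hx
  have hq : 0 ≤ 1 - s * x := by nlinarith
  rw [abs_of_nonneg (mul_nonneg (inv_nonneg.2 (hμ.le.trans hμx)) (pow_nonneg hq N))]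
  gcongr

lemma norm_inverse_sub_smul_geom_sum_le {A : Type*} [NormedRing A] [StarRing A]
    [NormedAlgebra ℝ A] [IsometricContinuousFunctionalCalculus ℝ A IsSelfAdjoint] {b : A}
    (hb : IsSelfAdjoint b) {μ ℓ s : ℝ} (hμ : 0 < μ) (hμℓ : μ ≤ ℓ)
    (hspec : spectrum ℝ b ⊆ Icc μ ℓ) (hs : 0 ≤ s) (hsℓ : s * ℓ ≤ 1) (N : ℕ) :
    ‖b⁻¹ʳ - s • ∑ i ∈ range N, (1 - s • b) ^ i‖ ≤ μ⁻¹ * (1 - s * μ) ^ N := by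
  have h0 : ∀ x ∈ spectrum ℝ b, x ≠ 0 := fun x hx => (hμ.trans_le (hspec hx).1).ne'
  have hunit : IsUnit b := spectrum.isUnit_of_zero_notMem ℝ fun h => h0 0 h rfl
  have hcfc : b⁻¹ʳ * (1 - s • b) ^ N = cfc (fun x => x⁻¹ * (1 - s * x) ^ N) b := by
    rw [cfc_mul (fun x : ℝ => x⁻¹) _ b (continuousOn_id.inv₀ h0),
      cfc_ringInverse_id (R := ℝ) b hunit, cfc_pow _ N b, cfc_sub _ _ b, cfc_const_one ℝ b,
      cfc_const_mul_id s b]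
  have hsμ : s * μ ≤ 1 := (mul_le_mul_of_nonneg_left hμℓ hs).trans hsℓ
  rw [inverse_sub_smul_geom_sum hunit, hcfc]
  exact norm_cfc_le (mul_nonneg (inv_nonneg.2 hμ.le) (pow_nonneg (by linarith) N))
    fun x hx => abs_inv_mul_one_sub_mul_pow_le hμ (hspec hx) hs hsℓ N

namespace Matrix

variable {m n : Type*}

lemma specNorm_eq_l2_opNorm [Fintype m] [Fintype n] [DecidableEq n] (A : Matrix m n ℝ) :
    specNorm A = ‖A‖ := rfl

lemma l2_opNorm_le_one_of_transpose_mul_self_eq_one [Fintype m] [Fintype n] [DecidableEq n]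
    {V : Matrix m n ℝ} (hV : Vᵀ * V = 1) : ‖V‖ ≤ 1 := by
  have h1 : ‖(1 : Matrix n n ℝ)‖ ≤ 1 := by
    rw [cstar_norm_def, map_one]
    exact ContinuousLinearMap.norm_id_le
  have hsq : ‖V‖ * ‖V‖ ≤ 1 := by
    rwa [← l2_opNorm_conjTranspose_mul_self, conjTranspose_eq_transpose_of_trivial, hV]
  nlinarith [norm_nonneg V]

lemma l2_opNorm_mul_mul_transpose_le [Fintype m] [Fintype n] [DecidableEq m] [DecidableEq n]
    {V : Matrix m n ℝ} (hV : Vᵀ * V = 1) (X : Matrix n n ℝ) : ‖V * X * Vᵀ‖ ≤ ‖X‖ := by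
  have hV1 := l2_opNorm_le_one_of_transpose_mul_self_eq_one hV
  have hVt : ‖Vᵀ‖ = ‖V‖ := by
    rw [← conjTranspose_eq_transpose_of_trivial, l2_opNorm_conjTranspose]
  calc ‖V * X * Vᵀ‖ ≤ ‖V‖ * ‖X‖ * ‖Vᵀ‖ :=
        (l2_opNorm_mul _ _).trans (mul_le_mul_of_nonneg_right (l2_opNorm_mul _ _) (norm_nonneg _))
    _ ≤ 1 * ‖X‖ * 1 := by rw [hVt]; gcongr
    _ = ‖X‖ := by ring

lemma le_smul_one_of_l2_opNorm_le [Fintype n] [DecidableEq n] {A : Matrix n n ℝ}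
    (hA : A.IsHermitian) {ℓ : ℝ} (hAℓ : ‖A‖ ≤ ℓ) : A ≤ ℓ • 1 := by
  rw [← Algebra.algebraMap_eq_smul_one, le_algebraMap_iff_spectrum_le hA.isSelfAdjoint]
  exact fun x hx => (Real.le_norm_self x).trans
    ((IsometricContinuousFunctionalCalculus.norm_spectrum_le A hx hA.isSelfAdjoint).trans hAℓ)

lemma transpose_mul_mul_le_transpose_mul_mul [Fintype m] [Fintype n] {A B : Matrix m m ℝ}
    (h : A ≤ B) (V : Matrix m n ℝ) : Vᵀ * A * V ≤ Vᵀ * B * V := by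
  rw [le_iff, ← Matrix.sub_mul, ← Matrix.mul_sub, ← conjTranspose_eq_transpose_of_trivial]
  exact (le_iff.1 h).conjTranspose_mul_mul_same V

lemma isSelfAdjoint_transpose_mul_mul [Fintype m] {A : Matrix m m ℝ} (hA : A.IsHermitian)
    (V : Matrix m n ℝ) : IsSelfAdjoint (Vᵀ * A * V) := by
  simpa [conjTranspose_eq_transpose_of_trivial] using
    (isHermitian_conjTranspose_mul_mul V hA).isSelfAdjoint

lemma spectrum_transpose_mul_mul_subset_Icc [Fintype m] [Fintype n] [DecidableEq m]
    [DecidableEq n] {V : Matrix m n ℝ} (hV : Vᵀ * V = 1) {A : Matrix m m ℝ} (hA : A.IsHermitian)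
    {a b : ℝ} (ha : a • 1 ≤ A) (hb : A ≤ b • 1) : spectrum ℝ (Vᵀ * A * V) ⊆ Icc a b := by
  have hcompress (r : ℝ) : Vᵀ * (r • 1 : Matrix m m ℝ) * V = algebraMap ℝ _ r := by
    rw [Matrix.mul_smul, Matrix.mul_one, Matrix.smul_mul, hV, Algebra.algebraMap_eq_smul_one]
  have hsa := isSelfAdjoint_transpose_mul_mul hA V
  intro x hx
  exact ⟨(algebraMap_le_iff_le_spectrum hsa).1
      (hcompress a ▸ transpose_mul_mul_le_transpose_mul_mul ha V) x hx,
    (le_algebraMap_iff_spectrum_le hsa).1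
      (hcompress b ▸ transpose_mul_mul_le_transpose_mul_mul hb V) x hx⟩

end Matrix

theorem neumann_series_truncation_bound_general
    {d k : ℕ} (H : Matrix (Fin d) (Fin d) ℝ)
    (μ ℓ : ℝ) (hμ : 0 < μ) (hμℓ : μ ≤ ℓ)
    (hH : (H - μ • (1 : Matrix (Fin d) (Fin d) ℝ)).PosSemidef)
    (hHn : specNorm H ≤ ℓ)
    (V₂ : Matrix (Fin d) (Fin k) ℝ) (hV : V₂ᵀ * V₂ = 1)
    (c : ℝ) (hc0 : 0 < c) (hc1 : c ≤ 1) (N : ℕ) :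
    specNorm (V₂ * (V₂ᵀ * H * V₂)⁻¹ * V₂ᵀ -
        (c / ℓ) • ∑ n ∈ Finset.range N,
          V₂ * ((1 : Matrix (Fin k) (Fin k) ℝ) - (c / ℓ) • (V₂ᵀ * H * V₂)) ^ n * V₂ᵀ)
      ≤ (1 / μ) * (1 - c * μ / ℓ) ^ N := by
  have hℓ : 0 < ℓ := hμ.trans_le hμℓ
  have hHherm : H.IsHermitian := by
    simpa using hH.isHermitian.add (isHermitian_one.smul (IsSelfAdjoint.all μ))
  set B := V₂ᵀ * H * V₂
  have hspec : spectrum ℝ B ⊆ Icc μ ℓ :=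
    spectrum_transpose_mul_mul_subset_Icc hV hHherm (le_iff.2 hH)
      (le_smul_one_of_l2_opNorm_le hHherm hHn)
  have hfactor : V₂ * B⁻¹ * V₂ᵀ - (c / ℓ) • ∑ n ∈ range N, V₂ * (1 - (c / ℓ) • B) ^ n * V₂ᵀ
      = V₂ * (B⁻¹ʳ - (c / ℓ) • ∑ n ∈ range N, (1 - (c / ℓ) • B) ^ n) * V₂ᵀ := by
    rw [nonsing_inv_eq_ringInverse, ← Matrix.sum_mul, ← Matrix.mul_sum, ← Matrix.smul_mul,
      ← Matrix.mul_smul, ← Matrix.sub_mul, ← Matrix.mul_sub]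
  rw [specNorm_eq_l2_opNorm, hfactor]
  calc _ ≤ ‖B⁻¹ʳ - (c / ℓ) • ∑ n ∈ range N, (1 - (c / ℓ) • B) ^ n‖ :=
        l2_opNorm_mul_mul_transpose_le hV _
    _ ≤ μ⁻¹ * (1 - c / ℓ * μ) ^ N :=
        norm_inverse_sub_smul_geom_sum_le (isSelfAdjoint_transpose_mul_mul hHherm V₂) hμ hμℓ
          hspec (by positivity) (by rwa [div_mul_cancel₀ c hℓ.ne']) N
    _ = 1 / μ * (1 - c * μ / ℓ) ^ N := by ring

/-- truncated Neumann-series approximation bound for the projected inverse. -/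
theorem neumann_series_truncation_bound
    {d k : ℕ} (H : Matrix (Fin d) (Fin d) ℝ) (hsymm : H.IsSymm)
    (μ ℓ : ℝ) (hμ : 0 < μ) (hμℓ : μ ≤ ℓ)
    (hH : (H - μ • (1 : Matrix (Fin d) (Fin d) ℝ)).PosSemidef)
    (hHn : specNorm H ≤ ℓ)
    (V₂ : Matrix (Fin d) (Fin k) ℝ) (hV : V₂ᵀ * V₂ = 1)
    (c : ℝ) (hc0 : 0 < c) (hc1 : c ≤ 1) (N : ℕ) :
    specNorm (V₂ * (V₂ᵀ * H * V₂)⁻¹ * V₂ᵀ -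
        (c / ℓ) • ∑ n ∈ Finset.range N,
          V₂ * ((1 : Matrix (Fin k) (Fin k) ℝ) - (c / ℓ) • (V₂ᵀ * H * V₂)) ^ n * V₂ᵀ)
      ≤ (1 / μ) * (1 - c * μ / ℓ) ^ N :=
  neumann_series_truncation_bound_general H μ ℓ hμ hμℓ hH hHn V₂ hV c hc0 hc1 N
end
end

section
/- Fix x ∈ ℝ^{d_x} and assume: for all y, ‖∇_y f(x,y)‖ ≤ ℓ_{f,0}; the maps y ↦ ∇_x f(x,y) and y ↦ ∇_y f(x,y) are ℓ_{f,1}-Lipschitz; for all y, ∇_{yy} g(x,y) is symmetric with μ_g I ⪯ ∇_{yy} g(x,y) (μ_g > 0) and ‖∇_{yy} g(x,y)‖ ≤ ℓ_{g,1} and ‖∇_{xy} g(x,y)‖ ≤ ℓ_{g,1}; the maps y ↦ ∇_{yy} g(x,y) and y ↦ ∇_{xy} g(x,y) are ℓ_{g,2}-Lipschitz in spectral norm; and ‖∇h(x)‖ ≤ ℓ_{h,0}. Then for all y₁, y₂ ∈ ℝ^{d_y}, ‖∇̄f(x,y₁) − ∇̄f(x,y₂)‖ ≤ L_f ‖y₁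 − y₂‖, where L_f := (1 + ℓ_{h,0}‖A⁺‖)(ℓ_{f,1} + (ℓ_{g,1} ℓ_{f,1} + ℓ_{f,0} ℓ_{g,2})/μ_g + ℓ_{f,0} ℓ_{g,1} ℓ_{g,2}/μ_g²). -/
open Matrix
open scoped Kronecker

noncomputable section

/-! Write `∇̄f(x,y) = ∇ₓf(x,y) + M(y) ∇_y f(x,y)` with `M = (J H - G) V₂ B⁻¹ V₂ᵀ - J`, where
`J = ∇hᵀ A⁺ᵀ`, `H = ∇_{yy} g`, `G = ∇_{xy} g` and `B = V₂ᵀ H V₂`. Each factor is bounded and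
Lipschitz in `y`: `B ⪰ μ_g I` gives `‖B⁻¹‖ ≤ 1/μ_g`, and `B₁⁻¹ - B₂⁻¹ = B₁⁻¹ (B₂ - B₁) B₂⁻¹` makes
`B⁻¹` Lipschitz with constant `ℓ_{g,2}/μ_g²`. Bounds and Lipschitz constants propagate through
products by `‖p₁q₁ - p₂q₂‖ ≤ ‖p₁ - p₂‖‖q₁‖ + ‖p₂‖‖q₁ - q₂‖`, and collecting them gives `L_f`. -/

-- `specNorm` is definitionally the norm of this instance.
open scoped Matrix.Norms.L2Operator

namespace Matrix

variable {𝕜 : Type*} [RCLike 𝕜] {l m n : Type*} [Fintype l] [Fintype m] [Fintype n]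
  [DecidableEq n]

lemma l2_opNorm_mul_sub_mul_le [DecidableEq m] (A₁ A₂ : Matrix l m 𝕜) (B₁ B₂ : Matrix m n 𝕜) :
    ‖A₁ * B₁ - A₂ * B₂‖ ≤ ‖A₁ - A₂‖ * ‖B₁‖ + ‖A₂‖ * ‖B₁ - B₂‖ := by
  calc ‖A₁ * B₁ - A₂ * B₂‖ = ‖(A₁ - A₂) * B₁ + A₂ * (B₁ - B₂)‖ := by
        rw [Matrix.sub_mul, Matrix.mul_sub, sub_add_sub_cancel]
    _ ≤ _ := (norm_add_le _ _).trans (add_le_add (l2_opNorm_mul _ _) (l2_opNorm_mul _ _))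

lemma l2_opNorm_mulVec_sub_mulVec_le (A₁ A₂ : Matrix m n 𝕜) (v₁ v₂ : EuclideanSpace 𝕜 n) :
    ‖WithLp.toLp 2 (A₁ *ᵥ v₁) - WithLp.toLp 2 (A₂ *ᵥ v₂)‖ ≤
      ‖A₁ - A₂‖ * ‖v₁‖ + ‖A₂‖ * ‖v₁ - v₂‖ := by
  calc ‖WithLp.toLp 2 (A₁ *ᵥ v₁) - WithLp.toLp 2 (A₂ *ᵥ v₂)‖
      = ‖WithLp.toLp 2 ((A₁ - A₂) *ᵥ v₁) + WithLp.toLp 2 (A₂ *ᵥ (v₁ - v₂))‖ := by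
        rw [← WithLp.toLp_sub, ← WithLp.toLp_add, Matrix.sub_mulVec, Matrix.mulVec_sub,
          sub_add_sub_cancel]
    _ ≤ _ := (norm_add_le _ _).trans (add_le_add (l2_opNorm_mulVec _ _) (l2_opNorm_mulVec _ _))

lemma l2_opNorm_one_le : ‖(1 : Matrix n n 𝕜)‖ ≤ 1 := by
  rw [cstar_norm_def, map_one]
  exact ContinuousLinearMap.norm_id_le

lemma l2_opNorm_le_one_of_conjTranspose_mul_self_eq_one {V : Matrix m n 𝕜} (hV : Vᴴ * V = 1) :
    ‖V‖ ≤ 1 := by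
  have h : ‖V‖ * ‖V‖ ≤ 1 := by
    rw [← l2_opNorm_conjTranspose_mul_self, hV]; exact l2_opNorm_one_le
  nlinarith [norm_nonneg V]

lemma l2_opNorm_transpose [DecidableEq m] (A : Matrix m n ℝ) : ‖Aᵀ‖ = ‖A‖ := by
  rw [← conjTranspose_eq_transpose_of_trivial, l2_opNorm_conjTranspose]

lemma PosSemidef.conjTranspose_mul_mul_sub_smul_one [DecidableEq m] {R : Type*} [CommRing R]
    [PartialOrder R] [StarRing R] [StarOrderedRing R] {H : Matrix m m R} {V : Matrix m n R} {μ : R}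
    (hH : (H - μ • 1).PosSemidef) (hV : Vᴴ * V = 1) : (Vᴴ * H * V - μ • 1).PosSemidef := by
  simpa [Matrix.mul_sub, Matrix.sub_mul, hV] using hH.conjTranspose_mul_mul_same V

open scoped RealInnerProductSpace in
lemma mul_norm_le_norm_toEuclideanCLM_of_posSemidef {B : Matrix n n ℝ} {μ : ℝ}
    (hB : (B - μ • 1).PosSemidef) (v : EuclideanSpace ℝ n) :
    μ * ‖v‖ ≤ ‖toEuclideanCLM (𝕜 := ℝ) B v‖ := by
  have hcoer : ‖v‖ * (μ * ‖v‖) ≤ ‖v‖ * ‖toEuclideanCLM (𝕜 := ℝ) B v‖ :=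
    calc ‖v‖ * (μ * ‖v‖) = μ * ⟪v, v⟫ := by rw [real_inner_self_eq_norm_sq]; ring
      _ ≤ ⟪v, toEuclideanCLM (𝕜 := ℝ) B v⟫ := by
        have := hB.dotProduct_mulVec_nonneg (WithLp.ofLp v)
        rw [sub_mulVec, dotProduct_sub, smul_mulVec, one_mulVec, dotProduct_smul,
          sub_nonneg] at this
        rw [inner_toEuclideanCLM, EuclideanSpace.inner_eq_star_dotProduct]
        simpa [dotProduct_comm] using this
      _ ≤ ‖v‖ * ‖toEuclideanCLM (𝕜 := ℝ) B v‖ := real_inner_le_norm _ _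
  rcases (norm_nonneg v).eq_or_lt with hv | hv
  · rw [← hv, mul_zero]; exact norm_nonneg _
  · exact le_of_mul_le_mul_left hcoer hv

lemma isUnit_of_posSemidef_sub_smul_one {B : Matrix n n ℝ} {μ : ℝ} (hμ : 0 < μ)
    (hB : (B - μ • 1).PosSemidef) : IsUnit B := by
  simpa using (PosDef.posSemidef_add hB (PosDef.one.smul hμ)).isUnit

lemma l2_opNorm_inv_le_of_posSemidef {B : Matrix n n ℝ} {μ : ℝ} (hμ : 0 < μ)
    (hB : (B - μ • 1).PosSemidef) : ‖B⁻¹‖ ≤ μ⁻¹ := by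
  have hBB : B * B⁻¹ = 1 :=
    mul_nonsing_inv B <| (isUnit_iff_isUnit_det B).mp (isUnit_of_posSemidef_sub_smul_one hμ hB)
  rw [cstar_norm_def]
  refine ContinuousLinearMap.opNorm_le_bound _ (inv_nonneg.mpr hμ.le) fun w => ?_
  have hw : toEuclideanCLM (𝕜 := ℝ) B (toEuclideanCLM (𝕜 := ℝ) B⁻¹ w) = w := by
    ext i; simp [mulVec_mulVec, hBB]
  rw [le_inv_mul_iff₀ hμ]
  simpa [hw] using
    mul_norm_le_norm_toEuclideanCLM_of_posSemidef hB (toEuclideanCLM (𝕜 := ℝ) B⁻¹ w)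

lemma l2_opNorm_inv_sub_inv_le_of_posSemidef {B₁ B₂ : Matrix n n ℝ} {μ : ℝ} (hμ : 0 < μ)
    (hB₁ : (B₁ - μ • 1).PosSemidef) (hB₂ : (B₂ - μ • 1).PosSemidef) :
    ‖B₁⁻¹ - B₂⁻¹‖ ≤ μ⁻¹ * ‖B₁ - B₂‖ * μ⁻¹ := by
  rw [inv_sub_inv (iff_of_true (isUnit_of_posSemidef_sub_smul_one hμ hB₁)
    (isUnit_of_posSemidef_sub_smul_one hμ hB₂)), ← norm_neg (B₁ - B₂), neg_sub]
  have hinv₁ := l2_opNorm_inv_le_of_posSemidef hμ hB₁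
  have hinv₂ := l2_opNorm_inv_le_of_posSemidef hμ hB₂
  calc ‖B₁⁻¹ * (B₂ - B₁) * B₂⁻¹‖ ≤ ‖B₁⁻¹‖ * ‖B₂ - B₁‖ * ‖B₂⁻¹‖ :=
        (l2_opNorm_mul _ _).trans (mul_le_mul_of_nonneg_right (l2_opNorm_mul _ _) (norm_nonneg _))
    _ ≤ μ⁻¹ * ‖B₂ - B₁‖ * μ⁻¹ := by gcongr

end Matrix

section BoundedLipschitz

variable {Y E F G : Type*} [SeminormedAddCommGroup Y] [SeminormedAddCommGroup E]
  [SeminormedAddCommGroup F] [SeminormedAddCommGroup G]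

def BoundedLipschitzWith (a α : ℝ) (u : Y → E) : Prop :=
  (∀ y, ‖u y‖ ≤ a) ∧ ∀ y₁ y₂, ‖u y₁ - u y₂‖ ≤ α * ‖y₁ - y₂‖

namespace BoundedLipschitzWith

variable {a α b β : ℝ} {u : Y → E} {v : Y → F}

lemma const {c : E} (hc : ‖c‖ ≤ a) : BoundedLipschitzWith a 0 (fun _ : Y => c) :=
  ⟨fun _ => hc, fun _ _ => by simp⟩

lemma sub {w : Y → E} (hu : BoundedLipschitzWith a α u) (hw : BoundedLipschitzWith b β w) :
    BoundedLipschitzWith (a + b) (α + β) (fun y => u y - w y) := by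
  refine ⟨fun y => norm_sub_le_of_le (hu.1 y) (hw.1 y), fun y₁ y₂ => ?_⟩
  calc ‖u y₁ - w y₁ - (u y₂ - w y₂)‖ = ‖(u y₁ - u y₂) - (w y₁ - w y₂)‖ := by abel_nf
    _ ≤ α * ‖y₁ - y₂‖ + β * ‖y₁ - y₂‖ := norm_sub_le_of_le (hu.2 y₁ y₂) (hw.2 y₁ y₂)
    _ = (α + β) * ‖y₁ - y₂‖ := by ring

lemma map₂ (Φ : E → F → G) (hΦ : ∀ p q, ‖Φ p q‖ ≤ ‖p‖ * ‖q‖)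
    (hΦ_sub : ∀ p₁ p₂ q₁ q₂, ‖Φ p₁ q₁ - Φ p₂ q₂‖ ≤ ‖p₁ - p₂‖ * ‖q₁‖ + ‖p₂‖ * ‖q₁ - q₂‖)
    (hu : BoundedLipschitzWith a α u) (hv : BoundedLipschitzWith b β v) :
    BoundedLipschitzWith (a * b) (α * b + a * β) (fun y => Φ (u y) (v y)) := by
  have ha : 0 ≤ a := (norm_nonneg _).trans (hu.1 0)
  refine ⟨fun y => (hΦ _ _).trans (mul_le_mul (hu.1 y) (hv.1 y) (norm_nonneg _) ha),
    fun y₁ y₂ => (hΦ_sub _ _ _ _).trans ?_⟩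
  have hα : 0 ≤ α * ‖y₁ - y₂‖ := (norm_nonneg _).trans (hu.2 y₁ y₂)
  calc ‖u y₁ - u y₂‖ * ‖v y₁‖ + ‖u y₂‖ * ‖v y₁ - v y₂‖
      ≤ α * ‖y₁ - y₂‖ * b + a * (β * ‖y₁ - y₂‖) :=
        add_le_add (mul_le_mul (hu.2 y₁ y₂) (hv.1 y₁) (norm_nonneg _) hα)
          (mul_le_mul (hu.1 y₂) (hv.2 y₁ y₂) (norm_nonneg _) ha)
    _ = (α * b + a * β) * ‖y₁ - y₂‖ := by ring

end BoundedLipschitzWith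

end BoundedLipschitz

section MatrixFamilies

variable {Y : Type*} [SeminormedAddCommGroup Y] {𝕜 : Type*} [RCLike 𝕜] {l m n : Type*}
  [Fintype l] [Fintype m] [Fintype n] [DecidableEq n] {a α b β : ℝ}

lemma BoundedLipschitzWith.matrix_mul [DecidableEq m] {u : Y → Matrix l m 𝕜}
    {v : Y → Matrix m n 𝕜}
    (hu : BoundedLipschitzWith a α u) (hv : BoundedLipschitzWith b β v) :
    BoundedLipschitzWith (a * b) (α * b + a * β) (fun y => u y * v y) :=
  map₂ (· * ·) l2_opNorm_mul l2_opNorm_mul_sub_mul_le hu hv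

lemma BoundedLipschitzWith.matrix_mulVec {u : Y → Matrix m n 𝕜} {v : Y → EuclideanSpace 𝕜 n}
    (hu : BoundedLipschitzWith a α u) (hv : BoundedLipschitzWith b β v) :
    BoundedLipschitzWith (a * b) (α * b + a * β) (fun y => WithLp.toLp 2 (u y *ᵥ v y)) :=
  map₂ (fun A (w : EuclideanSpace 𝕜 n) => WithLp.toLp 2 (A *ᵥ w)) l2_opNorm_mulVec
    l2_opNorm_mulVec_sub_mulVec_le hu hv

lemma boundedLipschitzWith_inv_of_posSemidef {B : Y → Matrix n n ℝ} {μ : ℝ} (hμ : 0 < μ)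
    (hB : ∀ y, (B y - μ • 1).PosSemidef) (hB_lip : ∀ y₁ y₂, ‖B y₁ - B y₂‖ ≤ β * ‖y₁ - y₂‖) :
    BoundedLipschitzWith μ⁻¹ (μ⁻¹ * β * μ⁻¹) (fun y => (B y)⁻¹) := by
  refine ⟨fun y => l2_opNorm_inv_le_of_posSemidef hμ (hB y), fun y₁ y₂ => ?_⟩
  calc ‖(B y₁)⁻¹ - (B y₂)⁻¹‖ ≤ μ⁻¹ * ‖B y₁ - B y₂‖ * μ⁻¹ :=
        l2_opNorm_inv_sub_inv_le_of_posSemidef hμ (hB y₁) (hB y₂)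
    _ ≤ μ⁻¹ * (β * ‖y₁ - y₂‖) * μ⁻¹ := by gcongr; exact hB_lip y₁ y₂
    _ = μ⁻¹ * β * μ⁻¹ * ‖y₁ - y₂‖ := by ring

end MatrixFamilies

theorem nablaBarF_lipschitz_in_y_general
    {dx dy my k : ℕ}
    (Ap : Matrix (Fin dy) (Fin my) ℝ)
    (V₂ : Matrix (Fin dy) (Fin k) ℝ)
    (hV₂orth : V₂ᵀ * V₂ = 1)
    (f g : Euc dx → Euc dy → ℝ) (h : Euc dx → Euc my)
    (x : Euc dx)
    (ℓf0 ℓf1 μg ℓg1 ℓg2 ℓh0 : ℝ) (hμ : 0 < μg)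
    (hfy0 : ∀ y : Euc dy, ‖grady f x y‖ ≤ ℓf0)
    (hfx_lip : ∀ y₁ y₂ : Euc dy, ‖gradx f x y₁ - gradx f x y₂‖ ≤ ℓf1 * ‖y₁ - y₂‖)
    (hfy_lip : ∀ y₁ y₂ : Euc dy, ‖grady f x y₁ - grady f x y₂‖ ≤ ℓf1 * ‖y₁ - y₂‖)
    (hpsd : ∀ y : Euc dy,
      (hessYY g x y - μg • (1 : Matrix (Fin dy) (Fin dy) ℝ)).PosSemidef)
    (hyyn : ∀ y : Euc dy, specNorm (hessYY g x y) ≤ ℓg1)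
    (hxyn : ∀ y : Euc dy, specNorm (hessXY g x y) ≤ ℓg1)
    (hyy_lip : ∀ y₁ y₂ : Euc dy,
      specNorm (hessYY g x y₁ - hessYY g x y₂) ≤ ℓg2 * ‖y₁ - y₂‖)
    (hxy_lip : ∀ y₁ y₂ : Euc dy,
      specNorm (hessXY g x y₁ - hessXY g x y₂) ≤ ℓg2 * ‖y₁ - y₂‖)
    (hjh : specNorm (jacM h x) ≤ ℓh0)
    (Lf : ℝ)
    (hLf : Lf = (1 + ℓh0 * specNorm Ap) *
      (ℓf1 + (ℓg1 * ℓf1 + ℓf0 * ℓg2) / μg + ℓf0 * ℓg1 * ℓg2 / μg ^ 2)) :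
    ∀ y₁ y₂ : Euc dy,
      ‖nablaBarF Ap V₂ f g h x y₁ - nablaBarF Ap V₂ f g h x y₂‖ ≤ Lf * ‖y₁ - y₂‖ := by
  have hV₂orth' : V₂ᴴ * V₂ = 1 := by rwa [conjTranspose_eq_transpose_of_trivial]
  have hV₂ : ‖V₂‖ ≤ 1 := l2_opNorm_le_one_of_conjTranspose_mul_self_eq_one hV₂orth'
  have hV : BoundedLipschitzWith 1 0 (fun _ : Euc dy => V₂) := .const hV₂
  have hVt : BoundedLipschitzWith 1 0 (fun _ : Euc dy => V₂ᵀ) :=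
    .const (by rwa [l2_opNorm_transpose])
  have hJ : BoundedLipschitzWith (ℓh0 * specNorm Ap) 0 (fun _ : Euc dy => (jacM h x)ᵀ * Apᵀ) :=
    .const <| (l2_opNorm_mul _ _).trans <| by
      rw [l2_opNorm_transpose, l2_opNorm_transpose]
      exact mul_le_mul_of_nonneg_right hjh (norm_nonneg _)
  have hH : BoundedLipschitzWith ℓg1 ℓg2 (hessYY g x) := ⟨hyyn, hyy_lip⟩
  have hG : BoundedLipschitzWith ℓg1 ℓg2 (hessXY g x) := ⟨hxyn, hxy_lip⟩
  have hBinv := boundedLipschitzWith_inv_of_posSemidef hμ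
    (fun y => by simpa only [conjTranspose_eq_transpose_of_trivial] using
      (hpsd y).conjTranspose_mul_mul_sub_smul_one hV₂orth') ((hVt.matrix_mul hH).matrix_mul hV).2
  have hM :=
    (((((hJ.matrix_mul hH).sub hG).matrix_mul hV).matrix_mul hBinv).matrix_mul hVt).sub hJ
  have hMv := hM.matrix_mulVec ⟨hfy0, hfy_lip⟩
  intro y₁ y₂
  rw [nablaBarF, nablaBarF, add_sub_add_comm]
  refine (norm_add_le_of_le (hfx_lip y₁ y₂) (hMv.2 y₁ y₂)).trans_eq ?_
  rw [hLf]
  field_simp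
  ring

/-- Lipschitz continuity of `∇̄f(x,·)` in the lower-level variable. -/
theorem nablaBarF_lipschitz_in_y
    {dx dy my k : ℕ}
    (A : Matrix (Fin my) (Fin dy) ℝ) (Ap : Matrix (Fin dy) (Fin my) ℝ)
    (hMP : IsMoorePenrose A Ap)
    (V₂ : Matrix (Fin dy) (Fin k) ℝ)
    (hV₂orth : V₂ᵀ * V₂ = 1)
    (hV₂ker : LinearMap.range V₂.mulVecLin = LinearMap.ker A.mulVecLin)
    (f g : Euc dx → Euc dy → ℝ) (h : Euc dx → Euc my)
    (x : Euc dx)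
    (ℓf0 ℓf1 μg ℓg1 ℓg2 ℓh0 : ℝ) (hμ : 0 < μg)
    (hfy0 : ∀ y : Euc dy, ‖grady f x y‖ ≤ ℓf0)
    (hfx_lip : ∀ y₁ y₂ : Euc dy, ‖gradx f x y₁ - gradx f x y₂‖ ≤ ℓf1 * ‖y₁ - y₂‖)
    (hfy_lip : ∀ y₁ y₂ : Euc dy, ‖grady f x y₁ - grady f x y₂‖ ≤ ℓf1 * ‖y₁ - y₂‖)
    (hsymm : ∀ y : Euc dy, (hessYY g x y).IsSymm)
    (hpsd : ∀ y : Euc dy,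
      (hessYY g x y - μg • (1 : Matrix (Fin dy) (Fin dy) ℝ)).PosSemidef)
    (hyyn : ∀ y : Euc dy, specNorm (hessYY g x y) ≤ ℓg1)
    (hxyn : ∀ y : Euc dy, specNorm (hessXY g x y) ≤ ℓg1)
    (hyy_lip : ∀ y₁ y₂ : Euc dy,
      specNorm (hessYY g x y₁ - hessYY g x y₂) ≤ ℓg2 * ‖y₁ - y₂‖)
    (hxy_lip : ∀ y₁ y₂ : Euc dy,
      specNorm (hessXY g x y₁ - hessXY g x y₂) ≤ ℓg2 * ‖y₁ - y₂‖)
    (hjh : specNorm (jacM h x) ≤ ℓh0)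
    (Lf : ℝ)
    (hLf : Lf = (1 + ℓh0 * specNorm Ap) *
      (ℓf1 + (ℓg1 * ℓf1 + ℓf0 * ℓg2) / μg + ℓf0 * ℓg1 * ℓg2 / μg ^ 2)) :
    ∀ y₁ y₂ : Euc dy,
      ‖nablaBarF Ap V₂ f g h x y₁ - nablaBarF Ap V₂ f g h x y₂‖ ≤ Lf * ‖y₁ - y₂‖ :=
  nablaBarF_lipschitz_in_y_general Ap V₂ hV₂orth f g h x ℓf0 ℓf1 μg ℓg1 ℓg2 ℓh0 hμ hfy0 hfx_lip
    hfy_lip hpsd hyyn hxyn hyy_lip hxy_lip hjh Lf hLf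
end
end

section
/- Let f : ℝ^{d_x} × ℝ^{d_y} → ℝ be differentiable with ∇f ℓ_{f,1}-Lipschitz and with ‖∇_y f(x,y)‖ ≤ ℓ_{f,0} for all (x,y), and let y* : ℝ^{d_x} → ℝ^{d_y} be differentiable such that the Jacobian ∇y*(x) satisfies ‖∇y*(x)‖ ≤ L_y (spectral norm) for all x and the map x ↦ ∇y*(x) is L_{yx}-Lipschitz in spectral norm. Then the function F(x) := f(x, y*(x)) is differentiable with ∇F(x) = ∇_x f(x, y*(x)) + ∇y*(x)ᵀ ∇_y f(x, y*(x)), and ∇F is L_F-Lipschitz, where L_F := ℓ_{f,1}(1 + L_y)² + ℓ_{f,0} L_{yx}. -/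
open Matrix
open scoped Kronecker

noncomputable section

/-! By the chain rule, `DF(x) = ∂ₓf + ∂_y f ∘ Dy*(x)`, whose Riesz representative is
`∇ₓf + (∇y*)ᵀ ∇_y f` at `(x, y*(x))`. For the Lipschitz bound split
`∇F(x₁) - ∇F(x₂) = Δ∇ₓf + J₁ᵀ Δ∇_y f + (J₁ - J₂)ᵀ ∇_y f(x₂, y*(x₂))`. By the mean value
inequality `y*` is `L_y`-Lipschitz, so the graph map `x ↦ (x, y*(x))` is `(1 + L_y)`-Lipschitz
and both `Δ∇ₓf` and `Δ∇_y f` are at most `ℓ_{f,1} (1 + L_y) ‖x₁ - x₂‖`; the three terms then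
contribute `ℓ_{f,1}(1 + L_y)`, `L_y ℓ_{f,1}(1 + L_y)` and `L_{yx} ℓ_{f,0}` times `‖x₁ - x₂‖`. -/

section Jacobian

variable {n m : ℕ}

lemma toEuclideanLin_jacM (φ : Euc n → Euc m) (x : Euc n) :
    Matrix.toEuclideanLin (jacM φ x) = (fderiv ℝ φ x : Euc n →ₗ[ℝ] Euc m) := by
  have : jacM φ x = LinearMap.toMatrix (EuclideanSpace.basisFun (Fin n) ℝ).toBasis
      (EuclideanSpace.basisFun (Fin m) ℝ).toBasis (fderiv ℝ φ x) := by
    ext i j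
    simp [jacM, LinearMap.toMatrix_apply]
  rw [this, Matrix.toEuclideanLin_eq_toLin_orthonormal, Matrix.toLin_toMatrix]

lemma norm_fderiv_eq_specNorm (φ : Euc n → Euc m) (x : Euc n) :
    ‖fderiv ℝ φ x‖ = specNorm (jacM φ x) := by
  rw [specNorm, toEuclideanLin_jacM]
  rfl

lemma specNorm_nonneg (M : Matrix (Fin m) (Fin n) ℝ) : 0 ≤ specNorm M := norm_nonneg _

open scoped Matrix.Norms.L2Operator in
lemma specNorm_transpose (M : Matrix (Fin m) (Fin n) ℝ) : specNorm Mᵀ = specNorm M :=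
  Matrix.l2_opNorm_conjTranspose M

lemma norm_toEuc_mulVec_le (M : Matrix (Fin m) (Fin n) ℝ) (v : Euc n) :
    ‖toEuc (M *ᵥ v)‖ ≤ specNorm M * ‖v‖ :=
  (LinearMap.toContinuousLinearMap (Matrix.toEuclideanLin M)).le_opNorm v

lemma norm_sub_le_of_specNorm_jacM_le {φ : Euc n → Euc m} {L : ℝ} (hφ : Differentiable ℝ φ)
    (hJ : ∀ x, specNorm (jacM φ x) ≤ L) (x₁ x₂ : Euc n) :
    ‖φ x₁ - φ x₂‖ ≤ L * ‖x₁ - x₂‖ :=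
  convex_univ.norm_image_sub_le_of_norm_fderiv_le (fun x _ => hφ x)
    (fun x _ => (norm_fderiv_eq_specNorm φ x).trans_le (hJ x)) (Set.mem_univ _) (Set.mem_univ _)

lemma fderiv_apply_eq_toEuc_jacM_mulVec (φ : Euc n → Euc m) (x v : Euc n) :
    fderiv ℝ φ x v = toEuc (jacM φ x *ᵥ v) :=
  (LinearMap.congr_fun (toEuclideanLin_jacM φ x) v).symm

lemma inner_toEuc_transpose_mulVec (M : Matrix (Fin m) (Fin n) ℝ) (w : Euc m)
    (v : Euc n) : inner ℝ (toEuc (Mᵀ *ᵥ w)) v = inner ℝ w (toEuc (M *ᵥ v)) := by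
  simp only [toEuc, EuclideanSpace.inner_eq_star_dotProduct, star_trivial,
    Matrix.dotProduct_mulVec, Matrix.vecMul_transpose]

end Jacobian

section ChainRule

variable {dx dy : ℕ} {f : Euc dx → Euc dy → ℝ} {x : Euc dx} {y : Euc dy}
  {D : Euc dx × Euc dy →L[ℝ] ℝ}

lemma inner_gradx_eq (hD : HasFDerivAt (Function.uncurry f) D (x, y)) (v : Euc dx) :
    inner ℝ (gradx f x y) v = D (v, 0) := by
  have h : HasFDerivAt (fun x' => f x' y) (D.comp (.inl ℝ _ _)) x :=
    (hD.comp x (hasFDerivAt_prodMk_left (𝕜 := ℝ) x y) :)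
  simp [gradx, h.hasGradientAt.gradient]

lemma inner_grady_eq (hD : HasFDerivAt (Function.uncurry f) D (x, y)) (w : Euc dy) :
    inner ℝ (grady f x y) w = D (0, w) := by
  have h : HasFDerivAt (fun y' => f x y') (D.comp (.inr ℝ _ _)) y :=
    (hD.comp y (hasFDerivAt_prodMk_right (𝕜 := ℝ) x y) :)
  simp [grady, h.hasGradientAt.gradient]

lemma hasGradientAt_comp_graph (hf : Differentiable ℝ (Function.uncurry f))
    {φ : Euc dx → Euc dy} (hφ : Differentiable ℝ φ) (x : Euc dx) :
    HasGradientAt (fun x' => f x' (φ x'))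
      (gradx f x (φ x) + toEuc ((jacM φ x)ᵀ *ᵥ grady f x (φ x))) x := by
  have hD := (hf (x, φ x)).hasFDerivAt
  have hdual : InnerProductSpace.toDual ℝ (Euc dx)
      (gradx f x (φ x) + toEuc ((jacM φ x)ᵀ *ᵥ grady f x (φ x))) =
      (fderiv ℝ (Function.uncurry f) (x, φ x)).comp
        ((ContinuousLinearMap.id ℝ (Euc dx)).prod (fderiv ℝ φ x)) := by
    ext v
    have hsplit : (v, fderiv ℝ φ x v) = (v, 0) + (0, fderiv ℝ φ x v) := by simp
    simp only [map_add, _root_.add_apply, InnerProductSpace.toDual_apply_apply, inner_gradx_eq hD,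
      inner_toEuc_transpose_mulVec, ← fderiv_apply_eq_toEuc_jacM_mulVec, inner_grady_eq hD,
      ContinuousLinearMap.comp_apply, ContinuousLinearMap.prod_apply,
      ContinuousLinearMap.id_apply, hsplit]
  rw [hasGradientAt_iff_hasFDerivAt, hdual]
  exact hD.comp x ((hasFDerivAt_id x).prodMk (hφ x).hasFDerivAt)

end ChainRule

lemma norm_add_toEuc_transpose_mulVec_sub_le {n m : ℕ} (a₁ a₂ : Euc n) (g₁ g₂ : Euc m)
    (J₁ J₂ : Matrix (Fin m) (Fin n) ℝ) :
    ‖(a₁ + toEuc (J₁ᵀ *ᵥ g₁)) - (a₂ + toEuc (J₂ᵀ *ᵥ g₂))‖ ≤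
      ‖a₁ - a₂‖ + specNorm J₁ * ‖g₁ - g₂‖ + specNorm (J₁ - J₂) * ‖g₂‖ := by
  have hsplit : (a₁ + toEuc (J₁ᵀ *ᵥ g₁)) - (a₂ + toEuc (J₂ᵀ *ᵥ g₂)) =
      (a₁ - a₂) + toEuc (J₁ᵀ *ᵥ (g₁ - g₂)) + toEuc ((J₁ - J₂)ᵀ *ᵥ g₂) := by
    ext i
    simp only [toEuc, PiLp.add_apply, PiLp.sub_apply, Matrix.transpose_sub,
      Matrix.sub_mulVec, Matrix.mulVec_sub, Pi.sub_apply]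
    ring
  rw [hsplit, ← specNorm_transpose J₁, ← specNorm_transpose (J₁ - J₂)]
  exact (norm_add₃_le).trans (add_le_add_three le_rfl (norm_toEuc_mulVec_le _ _)
    (norm_toEuc_mulVec_le _ _))

lemma sqrt_sq_add_sq_le_of_le_mul {a b L : ℝ} (ha : 0 ≤ a) (hb : 0 ≤ b) (hba : b ≤ L * a) :
    √(a ^ 2 + b ^ 2) ≤ (1 + L) * a := by
  have hLa : 0 ≤ L * a := hb.trans hba
  rw [Real.sqrt_le_left (by nlinarith)]
  nlinarith [mul_le_mul hba hba hb hLa]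

/-- `ℓ`-Lipschitz continuity of `(∇ₓ f, ∇_y f)`, written out because the norm on a product type is
the sup norm, not the Euclidean one. -/
def GradLipschitzWith {dx dy : ℕ} (ℓ : ℝ) (f : Euc dx → Euc dy → ℝ) : Prop :=
  ∀ (x₁ : Euc dx) (y₁ : Euc dy) (x₂ : Euc dx) (y₂ : Euc dy),
    √(‖gradx f x₁ y₁ - gradx f x₂ y₂‖ ^ 2 + ‖grady f x₁ y₁ - grady f x₂ y₂‖ ^ 2)
      ≤ ℓ * √(‖x₁ - x₂‖ ^ 2 + ‖y₁ - y₂‖ ^ 2)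

namespace GradLipschitzWith

variable {dx dy : ℕ} {ℓ : ℝ} {f : Euc dx → Euc dy → ℝ}

lemma nonneg (hf : GradLipschitzWith ℓ f) {x₁ x₂ : Euc dx} (hne : x₁ ≠ x₂) (y : Euc dy) :
    0 ≤ ℓ := by
  have h := (Real.sqrt_nonneg _).trans (hf x₁ y x₂ y)
  refine nonneg_of_mul_nonneg_left h (Real.sqrt_pos.2 ?_)
  simpa [← dist_eq_norm] using pow_pos (dist_pos.2 hne) 2

lemma norm_gradx_sub_le (hf : GradLipschitzWith ℓ f) (x₁ : Euc dx) (y₁ : Euc dy)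
    (x₂ : Euc dx) (y₂ : Euc dy) :
    ‖gradx f x₁ y₁ - gradx f x₂ y₂‖ ≤ ℓ * √(‖x₁ - x₂‖ ^ 2 + ‖y₁ - y₂‖ ^ 2) :=
  (Real.le_sqrt_of_sq_le (le_add_of_nonneg_right (sq_nonneg _))).trans (hf x₁ y₁ x₂ y₂)

lemma norm_grady_sub_le (hf : GradLipschitzWith ℓ f) (x₁ : Euc dx) (y₁ : Euc dy)
    (x₂ : Euc dx) (y₂ : Euc dy) :
    ‖grady f x₁ y₁ - grady f x₂ y₂‖ ≤ ℓ * √(‖x₁ - x₂‖ ^ 2 + ‖y₁ - y₂‖ ^ 2) :=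
  (Real.le_sqrt_of_sq_le (le_add_of_nonneg_left (sq_nonneg _))).trans (hf x₁ y₁ x₂ y₂)

end GradLipschitzWith

lemma norm_gradient_graph_sub_le {dx dy : ℕ} {f : Euc dx → Euc dy → ℝ} {φ : Euc dx → Euc dy}
    {ℓ₀ ℓ₁ L L' : ℝ} (hf : GradLipschitzWith ℓ₁ f) (hf0 : ∀ x y, ‖grady f x y‖ ≤ ℓ₀)
    (hφ : Differentiable ℝ φ) (hJ : ∀ x, specNorm (jacM φ x) ≤ L)
    (hJ_lip : ∀ x₁ x₂, specNorm (jacM φ x₁ - jacM φ x₂) ≤ L' * ‖x₁ - x₂‖) (x₁ x₂ : Euc dx) :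
    ‖(gradx f x₁ (φ x₁) + toEuc ((jacM φ x₁)ᵀ *ᵥ grady f x₁ (φ x₁))) -
        (gradx f x₂ (φ x₂) + toEuc ((jacM φ x₂)ᵀ *ᵥ grady f x₂ (φ x₂)))‖
      ≤ (ℓ₁ * (1 + L) ^ 2 + ℓ₀ * L') * ‖x₁ - x₂‖ := by
  rcases eq_or_ne x₁ x₂ with rfl | hne
  · simp
  set d := ‖x₁ - x₂‖
  have hL : 0 ≤ L := (specNorm_nonneg _).trans (hJ x₁)
  have hgraph : ℓ₁ * √(d ^ 2 + ‖φ x₁ - φ x₂‖ ^ 2) ≤ ℓ₁ * ((1 + L) * d) :=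
    mul_le_mul_of_nonneg_left (sqrt_sq_add_sq_le_of_le_mul (norm_nonneg _) (norm_nonneg _)
      (norm_sub_le_of_specNorm_jacM_le hφ hJ x₁ x₂)) (hf.nonneg hne (φ x₁))
  calc _ ≤ ‖gradx f x₁ (φ x₁) - gradx f x₂ (φ x₂)‖
          + specNorm (jacM φ x₁) * ‖grady f x₁ (φ x₁) - grady f x₂ (φ x₂)‖
          + specNorm (jacM φ x₁ - jacM φ x₂) * ‖grady f x₂ (φ x₂)‖ :=
        norm_add_toEuc_transpose_mulVec_sub_le _ _ _ _ _ _
    _ ≤ ℓ₁ * ((1 + L) * d) + L * (ℓ₁ * ((1 + L) * d)) + (L' * d) * ℓ₀ :=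
        add_le_add_three ((hf.norm_gradx_sub_le _ _ _ _).trans hgraph)
          (mul_le_mul (hJ x₁) ((hf.norm_grady_sub_le _ _ _ _).trans hgraph) (norm_nonneg _) hL)
          (mul_le_mul (hJ_lip x₁ x₂) (hf0 _ _) (norm_nonneg _)
            ((specNorm_nonneg _).trans (hJ_lip x₁ x₂)))
    _ = (ℓ₁ * (1 + L) ^ 2 + ℓ₀ * L') * d := by ring

/-- smoothness of the overall objective `F(x) = f(x, y*(x))`. -/
theorem F_differentiable_and_smooth
    {dx dy : ℕ} (f : Euc dx → Euc dy → ℝ)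
    (hf : Differentiable ℝ (Function.uncurry f))
    (ℓf0 ℓf1 Ly Lyx : ℝ)
    (hf_lip : ∀ (x₁ : Euc dx) (y₁ : Euc dy) (x₂ : Euc dx) (y₂ : Euc dy),
      Real.sqrt (‖gradx f x₁ y₁ - gradx f x₂ y₂‖ ^ 2 + ‖grady f x₁ y₁ - grady f x₂ y₂‖ ^ 2)
        ≤ ℓf1 * Real.sqrt (‖x₁ - x₂‖ ^ 2 + ‖y₁ - y₂‖ ^ 2))
    (hf0 : ∀ (x : Euc dx) (y : Euc dy), ‖grady f x y‖ ≤ ℓf0)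
    (ystar : Euc dx → Euc dy) (hys : Differentiable ℝ ystar)
    (hjac_bound : ∀ x : Euc dx, specNorm (jacM ystar x) ≤ Ly)
    (hjac_lip : ∀ x₁ x₂ : Euc dx,
      specNorm (jacM ystar x₁ - jacM ystar x₂) ≤ Lyx * ‖x₁ - x₂‖) :
    Differentiable ℝ (fun x => f x (ystar x)) ∧
    (∀ x : Euc dx, gradient (fun x' => f x' (ystar x')) x =
      gradx f x (ystar x) + toEuc ((jacM ystar x)ᵀ.mulVec (grady f x (ystar x)))) ∧
    (∀ x₁ x₂ : Euc dx,
      ‖gradient (fun x' => f x' (ystar x')) x₁ - gradient (fun x' => f x' (ystar x')) x₂‖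
        ≤ (ℓf1 * (1 + Ly) ^ 2 + ℓf0 * Lyx) * ‖x₁ - x₂‖) := by
  have hgrad x := (hasGradientAt_comp_graph hf hys x).gradient
  refine ⟨fun x => (hasGradientAt_comp_graph hf hys x).differentiableAt, hgrad, fun x₁ x₂ => ?_⟩
  rw [hgrad, hgrad]
  exact norm_gradient_graph_sub_le hf_lip hf0 hys hjac_bound hjac_lip x₁ x₂
end
end

section
/- Let E be a real inner product space, let φ : E → ℝ be differentiable, μ-strongly convex (μ > 0), and suppose its gradient ∇φ is L-Lipschitz. Then for every β with 0 < β ≤ 1/L and all y₁, y₂ ∈ E, ‖(y₁ − β ∇φ(y₁)) − (y₂ − β ∇φ(y₂))‖² ≤ (1 − βμ)‖y₁ − y₂‖². -/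
open Matrix
open scoped Kronecker

noncomputable section

/-! Strong convexity makes the gradient strongly monotone,
`μ ‖y₁ - y₂‖² ≤ ⟪G y₁ - G y₂, y₁ - y₂⟫`, while convexity together with the `L`-Lipschitz gradient
makes it co-coercive (Baillon–Haddad), `‖G y₁ - G y₂‖² ≤ L ⟪G y₁ - G y₂, y₁ - y₂⟫`; the latter
follows from the descent lemma applied at the gradient step `v - L⁻¹ (G v - G u)`. Expanding
`‖(y₁ - y₂) - β (G y₁ - G y₂)‖²` and using `β L ≤ 1` and then strong monotonicity gives the
factor `1 - β μ`. -/

open scoped RealInnerProductSpace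
open Set

section GradientInequalities

variable {E : Type*} [NormedAddCommGroup E] [InnerProductSpace ℝ E] {φ : E → ℝ} {G : E → E}

theorem hasDerivAt_comp_add_smul (hG : ∀ y, HasFDerivAt φ (innerSL ℝ (G y)) y) (x d : E) (t : ℝ) :
    HasDerivAt (fun s : ℝ => φ (x + s • d)) ⟪G (x + t • d), d⟫ t := by
  have hline : HasDerivAt (fun s : ℝ => x + s • d) d t := by
    simpa using ((hasDerivAt_id t).smul_const d).const_add x
  have h := (hG (x + t • d)).comp_hasDerivAt t hline
  rw [innerSL_apply_apply] at h
  exact h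

theorem hasFDerivAt_sub_mul_norm_sq (hG : ∀ y, HasFDerivAt φ (innerSL ℝ (G y)) y) (m : ℝ)
    (y : E) :
    HasFDerivAt (fun x => φ x - m / 2 * ‖x‖ ^ 2) (innerSL ℝ (G y - m • y)) y := by
  refine ((hG y).sub ((hasStrictFDerivAt_norm_sq y).hasFDerivAt.const_mul (m / 2))).congr_fderiv ?_
  ext v
  simp only [_root_.sub_apply, coe_innerSL_apply, _root_.smul_apply, nsmul_eq_mul, Nat.cast_ofNat, smul_eq_mul, map_sub, map_smul, sub_right_inj]
  ring

theorem ConvexOn.add_inner_gradient_le (hφ : ConvexOn ℝ univ φ)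
    (hG : ∀ y, HasFDerivAt φ (innerSL ℝ (G y)) y) (x y : E) :
    φ x + ⟪G x, y - x⟫ ≤ φ y := by
  have hline : ConvexOn ℝ univ (fun t : ℝ => φ (x + t • (y - x))) := by
    simpa [Function.comp_def, AffineMap.lineMap_apply, add_comm] using
      hφ.comp_affineMap (AffineMap.lineMap x y : ℝ →ᵃ[ℝ] E)
  have := hline.le_slope_of_hasDerivAt (mem_univ 0) (mem_univ 1) one_pos
    (hasDerivAt_comp_add_smul hG x (y - x) 0)
  simp only [zero_smul, add_zero, slope_def_field, one_smul, add_sub_cancel, sub_zero,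
    div_one] at this
  linarith

theorem ConvexOn.inner_gradient_sub_nonneg (hφ : ConvexOn ℝ univ φ)
    (hG : ∀ y, HasFDerivAt φ (innerSL ℝ (G y)) y) (x y : E) :
    0 ≤ ⟪G x - G y, x - y⟫ := by
  have hxy := hφ.add_inner_gradient_le hG x y
  have hyx := hφ.add_inner_gradient_le hG y x
  simp only [inner_sub_left, inner_sub_right] at hxy hyx ⊢
  linarith

theorem mul_norm_sq_le_inner_gradient_sub {μ : ℝ}
    (hsc : ConvexOn ℝ univ (fun y => φ y - μ / 2 * ‖y‖ ^ 2))
    (hG : ∀ y, HasFDerivAt φ (innerSL ℝ (G y)) y) (x y : E) :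
    μ * ‖x - y‖ ^ 2 ≤ ⟪G x - G y, x - y⟫ := by
  have := hsc.inner_gradient_sub_nonneg (hasFDerivAt_sub_mul_norm_sq hG μ) x y
  rw [show G x - μ • x - (G y - μ • y) = (G x - G y) - μ • (x - y) by module, inner_sub_left,
    real_inner_smul_left, real_inner_self_eq_norm_sq] at this
  linarith

theorem le_add_inner_gradient_add_mul_norm_sq {L : ℝ}
    (hG : ∀ y, HasFDerivAt φ (innerSL ℝ (G y)) y)
    (hLip : ∀ y₁ y₂, ‖G y₁ - G y₂‖ ≤ L * ‖y₁ - y₂‖) (x y : E) :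
    φ y ≤ φ x + ⟪G x, y - x⟫ + L / 2 * ‖y - x‖ ^ 2 := by
  set d := y - x
  set h : ℝ → ℝ := fun t => φ (x + t • d) - t * ⟪G x, d⟫ - L / 2 * t ^ 2 * ‖d‖ ^ 2
  have hderiv (t : ℝ) : HasDerivAt h (⟪G (x + t • d), d⟫ - ⟪G x, d⟫ - L * t * ‖d‖ ^ 2) t := by
    refine (((hasDerivAt_comp_add_smul hG x d t).sub ((hasDerivAt_id t).mul_const ⟪G x, d⟫)).sub
      (((hasDerivAt_pow 2 t).const_mul (L / 2)).mul_const (‖d‖ ^ 2))).congr_deriv ?_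
    simp only [Nat.cast_ofNat]
    ring
  have hanti : AntitoneOn h (Ici 0) := by
    refine antitoneOn_of_hasDerivWithinAt_nonpos (convex_Ici 0)
      (fun t _ => (hderiv t).continuousAt.continuousWithinAt)
      (fun t _ => (hderiv t).hasDerivWithinAt) fun t ht => ?_
    rw [interior_Ici, mem_Ioi] at ht
    have hcs : ⟪G (x + t • d) - G x, d⟫ ≤ L * t * ‖d‖ ^ 2 := calc
      _ ≤ ‖G (x + t • d) - G x‖ * ‖d‖ := real_inner_le_norm _ _
      _ ≤ L * ‖t • d‖ * ‖d‖ := by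
        gcongr
        simpa using hLip (x + t • d) x
      _ = L * t * ‖d‖ ^ 2 := by rw [norm_smul, Real.norm_of_nonneg ht.le]; ring
    rw [inner_sub_left] at hcs
    linarith
  have := hanti (mem_Ici.mpr le_rfl) (show (0 : ℝ) ≤ 1 from zero_le_one) zero_le_one
  simp only [h, d, one_smul, zero_smul, add_zero, add_sub_cancel] at this
  linarith

theorem ConvexOn.add_inner_gradient_add_norm_sq_le {L : ℝ} (hL : 0 < L) (hφ : ConvexOn ℝ univ φ)
    (hG : ∀ y, HasFDerivAt φ (innerSL ℝ (G y)) y)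
    (hLip : ∀ y₁ y₂, ‖G y₁ - G y₂‖ ≤ L * ‖y₁ - y₂‖) (u v : E) :
    φ u + ⟪G u, v - u⟫ + ‖G v - G u‖ ^ 2 / (2 * L) ≤ φ v := by
  set g := G v - G u
  -- Compare `φ` at `u` and `v` through the gradient step `w` taken from `v`.
  set w := v - L⁻¹ • g
  have hlower := hφ.add_inner_gradient_le hG u w
  have hupper := le_add_inner_gradient_add_mul_norm_sq hG hLip v w
  have hwu : ⟪G u, w - u⟫ = ⟪G u, v - u⟫ - L⁻¹ * ⟪G u, g⟫ := by
    rw [show w - u = (v - u) - L⁻¹ • g by module, inner_sub_right, real_inner_smul_right]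
  have hwv : ⟪G v, w - v⟫ = -(L⁻¹ * ⟪G v, g⟫) := by
    rw [show w - v = -(L⁻¹ • g) by module, inner_neg_right, real_inner_smul_right]
  have hnorm : ‖w - v‖ ^ 2 = L⁻¹ ^ 2 * ‖g‖ ^ 2 := by
    rw [show w - v = -(L⁻¹ • g) by module, norm_neg, norm_smul, mul_pow, Real.norm_eq_abs, sq_abs]
  have hg : L⁻¹ * ⟪G v, g⟫ - L⁻¹ * ⟪G u, g⟫ = L⁻¹ * ‖g‖ ^ 2 := by
    rw [← mul_sub, ← inner_sub_left, real_inner_self_eq_norm_sq]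
  rw [hwu] at hlower
  rw [hwv, hnorm] at hupper
  have hcoef : L / 2 * (L⁻¹ ^ 2 * ‖g‖ ^ 2) = L⁻¹ * ‖g‖ ^ 2 - ‖g‖ ^ 2 / (2 * L) := by
    field_simp
    ring
  linarith

theorem ConvexOn.norm_gradient_sub_sq_le {L : ℝ} (hL : 0 < L) (hφ : ConvexOn ℝ univ φ)
    (hG : ∀ y, HasFDerivAt φ (innerSL ℝ (G y)) y)
    (hLip : ∀ y₁ y₂, ‖G y₁ - G y₂‖ ≤ L * ‖y₁ - y₂‖) (x y : E) :
    ‖G x - G y‖ ^ 2 ≤ L * ⟪G x - G y, x - y⟫ := by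
  have hxy := hφ.add_inner_gradient_add_norm_sq_le hL hG hLip x y
  have hyx := hφ.add_inner_gradient_add_norm_sq_le hL hG hLip y x
  rw [norm_sub_rev] at hxy
  have hsum : ‖G x - G y‖ ^ 2 / L ≤ ⟪G x - G y, x - y⟫ := by
    have htwo : ‖G x - G y‖ ^ 2 / L = 2 * (‖G x - G y‖ ^ 2 / (2 * L)) := by
      field_simp
    simp only [inner_sub_left, inner_sub_right] at hxy hyx ⊢
    linarith
  rwa [div_le_iff₀' hL] at hsum

end GradientInequalities

theorem norm_sub_smul_sq_le {E : Type*} [NormedAddCommGroup E] [InnerProductSpace ℝ E]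
    {d g : E} {μ L β : ℝ} (hμ₀ : 0 ≤ μ) (hμ : μ * ‖d‖ ^ 2 ≤ ⟪g, d⟫) (hL : ‖g‖ ^ 2 ≤ L * ⟪g, d⟫)
    (hβ : 0 < β) (hβL : β * L ≤ 1) :
    ‖d - β • g‖ ^ 2 ≤ (1 - β * μ) * ‖d‖ ^ 2 := by
  have hgd : 0 ≤ ⟪g, d⟫ := (mul_nonneg hμ₀ (sq_nonneg _)).trans hμ
  calc ‖d - β • g‖ ^ 2 = ‖d‖ ^ 2 - 2 * β * ⟪g, d⟫ + β ^ 2 * ‖g‖ ^ 2 := by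
        rw [norm_sub_sq_real, real_inner_smul_right, norm_smul, mul_pow, Real.norm_eq_abs, sq_abs,
          real_inner_comm]
        ring
    _ ≤ ‖d‖ ^ 2 - 2 * β * ⟪g, d⟫ + β * ⟪g, d⟫ := by
        nlinarith [mul_le_mul_of_nonneg_left hL (sq_nonneg β), mul_le_mul_of_nonneg_right hβL hgd]
    _ ≤ (1 - β * μ) * ‖d‖ ^ 2 := by nlinarith [mul_le_mul_of_nonneg_left hμ hβ.le]

/-- one-step contraction of the gradient step of a strongly convex
function with Lipschitz gradient, on a real inner product space. -/
theorem gradient_step_contraction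
    {E : Type*} [NormedAddCommGroup E] [InnerProductSpace ℝ E]
    (φ : E → ℝ) (G : E → E)
    (hG : ∀ y : E, HasFDerivAt φ ((innerSL ℝ (G y)) : E →L[ℝ] ℝ) y)
    (μ L : ℝ) (hμ : 0 < μ)
    (hsc : ConvexOn ℝ Set.univ (fun y : E => φ y - μ / 2 * ‖y‖ ^ 2))
    (hLip : ∀ y₁ y₂ : E, ‖G y₁ - G y₂‖ ≤ L * ‖y₁ - y₂‖) :
    ∀ β : ℝ, 0 < β → β ≤ 1 / L →
      ∀ y₁ y₂ : E,
        ‖(y₁ - β • G y₁) - (y₂ - β • G y₂)‖ ^ 2 ≤ (1 - β * μ) * ‖y₁ - y₂‖ ^ 2 := by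
  intro β hβ hβL y₁ y₂
  have hL : 0 < L := one_div_pos.mp (hβ.trans_le hβL)
  have hφ : ConvexOn ℝ univ φ :=
    (strongConvexOn_iff_convex.mpr hsc).convexOn fun r => by positivity
  rw [show (y₁ - β • G y₁) - (y₂ - β • G y₂) = (y₁ - y₂) - β • (G y₁ - G y₂) by module]
  exact norm_sub_smul_sq_le hμ.le (mul_norm_sq_le_inner_gradient_sub hsc hG y₁ y₂)
    (hφ.norm_gradient_sub_sq_le hL hG hLip y₁ y₂) hβ ((le_div_iff₀ hL).mp (by simpa using hβL))
end
end
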